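/- Let A, B ∈ ℝ^{n×n} and x : ℝ → ℝ^n satisfy x(t) = A x(t−a) + B x(t−b) for all t, with b > a > 0. For k ≥ 1 define X_k(t) ∈ ℝ^{kn} as the stack of x(t−kb), x(t−(k−1)b−a), …, x(t−b−(k−1)a). Then X_k(t+b−a) = A_k X_k(t) + B_k x(t−ka) and x(t) = C_k X_k(t) + D_k x(t−ka), where A_k is the block upper shift, B_k = [0;…;0;I_n], C_k = [B^{[k]}, A^{[1]}B^{[k−1]}, …, A^{[k−1]}B^{[1]}] and D_k = A^{[k]} = A^k are built from shuffle powers. -/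
import Mathlib


open Matrix

/-- The shuffle power `A^{[i]}B^{[j]}`: the sum of all words in the letters A, B
containing exactly i occurrences of A and j occurrences of B. -/
def shufflePow {n : ℕ} {R : Type*} [Semiring R] (A B : Matrix (Fin n) (Fin n) R) :
    ℕ → ℕ → Matrix (Fin n) (Fin n) R
  | 0, 0 => 1
  | i + 1, 0 => A * shufflePow A B i 0
  | 0, j + 1 => B * shufflePow A B 0 j
  | i + 1, j + 1 => A * shufflePow A B i (j + 1) + B * shufflePow A B (i + 1) j

/-- The block upper shift matrix A_k. -/
def blockShift (k n : ℕ) : Matrix (Fin k × Fin n) (Fin k × Fin n) ℝ :=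
  Matrix.of fun r c => if (c.1 : ℕ) = (r.1 : ℕ) + 1 ∧ c.2 = r.2 then 1 else 0

/-- The block column B_k with I_n in the bottom block. -/
def blockBottom (k n : ℕ) : Matrix (Fin k × Fin n) (Fin n) ℝ :=
  Matrix.of fun r c => if (r.1 : ℕ) = k - 1 ∧ r.2 = c then 1 else 0

/-- C_k = [B^{[k]}, A^{[1]}B^{[k−1]}, …, A^{[k−1]}B^{[1]}]. -/
def Cmat {n : ℕ} (k : ℕ) (A B : Matrix (Fin n) (Fin n) ℝ) :
    Matrix (Fin n) (Fin k × Fin n) ℝ :=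
  Matrix.of fun p c => shufflePow A B (c.1 : ℕ) (k - (c.1 : ℕ)) p c.2

/-- The stacked state X_k(t) of x(t−kb), x(t−(k−1)b−a), …, x(t−b−(k−1)a):
the i-th block from the top (0-indexed) is x(t − (k−i)b − i·a). -/
def Xstack {n : ℕ} (k : ℕ) (a b : ℝ) (x : ℝ → Fin n → ℝ) (t : ℝ) :
    Fin k × Fin n → ℝ :=
  fun r => x (t - ((k - (r.1 : ℕ) : ℕ) : ℝ) * b - ((r.1 : ℕ) : ℝ) * a) r.2

lemma mulVec_sum' {n m : ℕ} (M : Matrix (Fin n) (Fin m) ℝ) {ι : Type*} (s : Finset ι)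
    (v : ι → Fin m → ℝ) : M.mulVec (∑ i ∈ s, v i) = ∑ i ∈ s, M.mulVec (v i) :=
  map_sum M.mulVecLin v s

lemma shufflePow_zero_succ {n : ℕ} (A B : Matrix (Fin n) (Fin n) ℝ) (j : ℕ) :
    shufflePow A B 0 (j+1) = B * shufflePow A B 0 j := by simp [shufflePow]

lemma shufflePow_succ_left {n : ℕ} (A B : Matrix (Fin n) (Fin n) ℝ) (i j : ℕ) :
    shufflePow A B (i+1) j =
      A * shufflePow A B i j + (if j = 0 then 0 else B * shufflePow A B (i+1) (j-1)) := by
  cases j <;> simp [shufflePow]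

lemma key {n : ℕ} (A B : Matrix (Fin n) (Fin n) ℝ) (a b : ℝ)
    (x : ℝ → Fin n → ℝ)
    (hx : ∀ t : ℝ, x t = A.mulVec (x (t - a)) + B.mulVec (x (t - b))) :
    ∀ k t, x t = ∑ i ∈ Finset.range (k+1),
      (shufflePow A B i (k-i)).mulVec (x (t - ((k-i : ℕ):ℝ)*b - (i:ℝ)*a)) := by
  intro k
  induction k with
  | zero => intro t; simp [shufflePow, Matrix.one_mulVec]
  | succ k ih =>
    intro t
    have hA : A.mulVec (x (t-a)) = ∑ i ∈ Finset.range (k+1),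
        (A * shufflePow A B i (k-i)).mulVec (x (t - ((k-i:ℕ):ℝ)*b - ((i:ℕ)+1)*a)) := by
      rw [ih (t-a), mulVec_sum']
      refine Finset.sum_congr rfl fun i hi => ?_
      rw [Matrix.mulVec_mulVec]
      congr 2
      ring
    have hB : B.mulVec (x (t-b)) = ∑ j ∈ Finset.range (k+1),
        (B * shufflePow A B j (k-j)).mulVec (x (t - ((k+1-j:ℕ):ℝ)*b - (j:ℝ)*a)) := by
      rw [ih (t-b), mulVec_sum']
      refine Finset.sum_congr rfl fun j hj => ?_
      rw [Matrix.mulVec_mulVec]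
      congr 2
      have : (k+1-j : ℕ) = (k-j) + 1 := by
        have := Finset.mem_range.mp hj; omega
      rw [this]
      push_cast
      ring
    rw [hx t, hA, hB]
    conv_rhs => rw [Finset.sum_range_succ']
    have hsplit : ∀ i ∈ Finset.range (k+1),
        (shufflePow A B (i+1) (k+1-(i+1))).mulVec
          (x (t - ((k+1-(i+1) : ℕ):ℝ)*b - ((i+1:ℕ):ℝ)*a)) =
        (A * shufflePow A B i (k-i)).mulVec (x (t - ((k-i:ℕ):ℝ)*b - ((i:ℕ)+1)*a)) +
        (if (k-i:ℕ) = 0 then (0 : Matrix (Fin n) (Fin n) ℝ)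
          else B * shufflePow A B (i+1) (k-i-1)).mulVec
          (x (t - ((k-i:ℕ):ℝ)*b - ((i:ℕ)+1)*a)) := by
      intro i hi
      have hki : (k+1-(i+1) : ℕ) = k - i := by omega
      rw [hki, shufflePow_succ_left, Matrix.add_mulVec]
      push_cast
      ring_nf
    rw [Finset.sum_congr rfl hsplit]
    conv_rhs => rw [Finset.sum_add_distrib]
    rw [add_assoc]
    congr 1
    -- ∑B = ∑ ite-term + f 0
    conv_rhs => rw [Finset.sum_range_succ]
    simp only [Nat.sub_self, eq_self_iff_true, if_true, Matrix.zero_mulVec, add_zero]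
    conv_lhs => rw [Finset.sum_range_succ']
    congr 1
    · refine Finset.sum_congr rfl fun i hi => ?_
      have hmem := Finset.mem_range.mp hi
      have h1 : (k - i : ℕ) ≠ 0 := by omega
      rw [if_neg h1]
      have h2 : (k - i - 1 : ℕ) = k - (i+1) := by omega
      have h3 : (k + 1 - (i+1) : ℕ) = k - i := by omega
      rw [h2, h3]
      push_cast
      ring_nf
    · have h4 : (k+1-0 : ℕ) = k + 1 := by omega
      simp only [Nat.sub_zero, h4, Nat.cast_zero, shufflePow_zero_succ]

lemma blockShift_mulVec {k n : ℕ} (v : Fin k × Fin n → ℝ) (i : Fin k) (p : Fin n) :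
    (Matrix.of fun r c => if (c.1 : ℕ) = (r.1 : ℕ) + 1 ∧ c.2 = r.2 then (1:ℝ) else 0).mulVec v (i, p)
      = if h : (i:ℕ)+1 < k then v (⟨(i:ℕ)+1, h⟩, p) else 0 := by
  simp only [Matrix.mulVec, dotProduct, Matrix.of_apply, ite_mul, one_mul, zero_mul,
    Fintype.sum_prod_type, ite_and]
  have h1 : ∀ c1 : Fin k, ∑ c2 : Fin n,
      (if (c1:ℕ) = (i:ℕ)+1 then if c2 = p then v (c1, c2) else 0 else 0)
      = if (c1:ℕ) = (i:ℕ)+1 then v (c1, p) else 0 := by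
    intro c1
    by_cases h : (c1:ℕ) = (i:ℕ)+1 <;> simp [h]
  rw [Finset.sum_congr rfl fun c1 _ => h1 c1]
  by_cases h : (i:ℕ)+1 < k
  · rw [dif_pos h]
    rw [Finset.sum_eq_single (⟨(i:ℕ)+1, h⟩ : Fin k)]
    · simp
    · intro c1 _ hne
      rw [if_neg]
      intro hc
      exact hne (Fin.ext hc)
    · simp
  · rw [dif_neg h]
    apply Finset.sum_eq_zero
    intro c1 _
    rw [if_neg]
    intro hc
    exact h (hc ▸ c1.isLt)

lemma blockBottom_mulVec {k n : ℕ} (w : Fin n → ℝ) (i : Fin k) (p : Fin n) :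
    (Matrix.of fun (r : Fin k × Fin n) (c : Fin n) =>
        if (r.1 : ℕ) = k - 1 ∧ r.2 = c then (1:ℝ) else 0).mulVec w (i, p)
      = if (i:ℕ) = k - 1 then w p else 0 := by
  simp only [Matrix.mulVec, dotProduct, Matrix.of_apply, ite_mul, one_mul, zero_mul, ite_and]
  by_cases h : (i:ℕ) = k - 1 <;> simp [h]

/- STATEMENT 13: X_k(t+b−a) = A_k X_k(t) + B_k x(t−ka) and
x(t) = C_k X_k(t) + D_k x(t−ka), with D_k = A^{[k]} = A^k. -/
theorem stmt13 {n : ℕ} (A B : Matrix (Fin n) (Fin n) ℝ) (a b : ℝ)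
    (ha : 0 < a) (hab : a < b) (x : ℝ → Fin n → ℝ)
    (hx : ∀ t : ℝ, x t = A.mulVec (x (t - a)) + B.mulVec (x (t - b)))
    (k : ℕ) (hk : 1 ≤ k) (t : ℝ) :
    Xstack k a b x (t + b - a) =
        (blockShift k n).mulVec (Xstack k a b x t) +
          (blockBottom k n).mulVec (x (t - (k : ℝ) * a)) ∧
      x t = (Cmat k A B).mulVec (Xstack k a b x t) +
          (shufflePow A B k 0).mulVec (x (t - (k : ℝ) * a)) := by
  constructor
  · funext r
    obtain ⟨i, p⟩ := r
    have hBS := blockShift_mulVec (Xstack k a b x t) i p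
    have hBB := blockBottom_mulVec (x (t - (k:ℝ)*a)) i p
    simp only [Pi.add_apply, blockShift, blockBottom]
    rw [hBS, hBB]
    by_cases h : (i:ℕ)+1 < k
    · rw [dif_pos h, if_neg (by omega : ¬ (i:ℕ) = k - 1), add_zero]
      simp only [Xstack]
      have hc : ((k - (i:ℕ) : ℕ) : ℝ) = ((k - ((i:ℕ)+1) : ℕ) : ℝ) + 1 := by
        have : (k - (i:ℕ) : ℕ) = (k - ((i:ℕ)+1)) + 1 := by omega
        rw [this]; push_cast; ring
      congr 1
      rw [hc]
      push_cast
      ring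
    · have hik : (i:ℕ) = k - 1 := by have := i.isLt; omega
      rw [dif_neg h, if_pos hik, zero_add]
      simp only [Xstack]
      congr 1
      have h1 : (k - (i:ℕ) : ℕ) = 1 := by have := i.isLt; omega
      rw [h1, hik]
      have : ((k - 1 : ℕ) : ℝ) = (k:ℝ) - 1 := by
        rw [Nat.cast_sub hk]; simp
      rw [this]
      push_cast
      ring
  · have hkey := key A B a b x hx k t
    rw [Finset.sum_range_succ] at hkey
    simp only [Nat.sub_self, Nat.cast_zero, zero_mul, sub_zero] at hkey
    rw [hkey]
    congr 1
    · funext p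
      rw [Finset.sum_apply]
      simp only [Matrix.mulVec, dotProduct, Cmat, Matrix.of_apply, Fintype.sum_prod_type,
        Xstack]
      exact (Fin.sum_univ_eq_sum_range _ k).symm
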